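/- arXiv:math/9905205 — 3 statements merged into one kernel-verified Lean document; each statement's English description precedes it below -/
import Mathlib

section
/- Let μ be a Borel probability measure on a metric space. If for μ-almost every x the lower pointwise dimension liminf_{r→0} log μ(B(x,r))/log r is at least d, then the Hausdorff dimension of μ (the infimum of dim_H Z over sets Z of full measure) is at least d. -/
/-!
Fix `s < d`. Where the lower pointwise dimension exceeds `s`, the ball measures eventually satisfy
`μ (B(x, r)) ≤ r ^ s`. Since `Z` has full measure, some part `A` of `Z` of positive measure has
this bound uniformly for `r ≤ b`, and the mass distribution principle then gives
`0 < μ A ≤ μH[s] A ≤ μH[s] Z`, so `s ≤ dimH Z`.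
-/

open Metric Filter Set Topology MeasureTheory
open scoped ENNReal

lemma Real.eventually_le_rpow_of_lt_liminf_log_div_log {m : ℝ → ℝ} (hm0 : ∀ r, 0 ≤ m r)
    (hm1 : ∀ r, m r ≤ 1) {s : ℝ}
    (hs : s < liminf (fun r => Real.log (m r) / Real.log r) (𝓝[>] 0)) :
    ∀ᶠ r in 𝓝[>] 0, m r ≤ r ^ s := by
  have hsmall : ∀ᶠ r in 𝓝[>] (0 : ℝ), r ∈ Ioo 0 1 := Ioo_mem_nhdsGT one_pos
  have hbdd : IsBoundedUnder (· ≥ ·) (𝓝[>] 0) fun r => Real.log (m r) / Real.log r := by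
    refine isBoundedUnder_of_eventually_ge (a := 0) ?_
    filter_upwards [hsmall] with r ⟨hr0, hr1⟩
    exact div_nonneg_of_nonpos (Real.log_nonpos (hm0 r) (hm1 r)) (Real.log_neg hr0 hr1).le
  filter_upwards [hsmall, eventually_lt_of_lt_liminf hs hbdd] with r ⟨hr0, hr1⟩ hlt
  rcases (hm0 r).eq_or_lt with hzero | hpos
  · rw [← hzero]
    positivity
  · have hlog : Real.log (m r) < Real.log (r ^ s) := by
      rwa [Real.log_rpow hr0, ← lt_div_iff_of_neg (Real.log_neg hr0 hr1)]
    exact ((Real.log_lt_log_iff hpos (Real.rpow_pos_of_pos hr0 s)).1 hlog).le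

lemma eventually_measure_closedBall_le_of_lt_liminf {X : Type*} [PseudoMetricSpace X]
    [MeasurableSpace X] (μ : Measure X) [IsProbabilityMeasure μ] (x : X) {s : ℝ}
    (hs : s < liminf (fun r => Real.log (μ (closedBall x r)).toReal / Real.log r) (𝓝[>] 0)) :
    ∀ᶠ r in 𝓝[>] 0, μ (closedBall x r) ≤ ENNReal.ofReal (r ^ s) := by
  filter_upwards [Real.eventually_le_rpow_of_lt_liminf_log_div_log
    (fun _ => ENNReal.toReal_nonneg) (fun _ => measureReal_le_one) hs] with r hr
  rw [← ofReal_measureReal]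
  exact ENNReal.ofReal_le_ofReal hr

lemma measure_le_ediam_rpow_of_measure_closedBall_le {X : Type*} [PseudoMetricSpace X]
    [MeasurableSpace X] (μ : Measure X) {d b : ℝ} (hd : 0 ≤ d) {x : X} {t : Set X}
    (hx : x ∈ t) (ht : ediam t < ENNReal.ofReal b)
    (hball : ∀ r ∈ Ioc 0 b, μ (closedBall x r) ≤ ENNReal.ofReal (r ^ d)) :
    μ t ≤ ediam t ^ d := by
  have htop : ediam t ≠ ∞ := ht.ne_top
  set δ := (ediam t).toReal
  have hδb : δ < b := ENNReal.toReal_lt_of_lt_ofReal ht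
  have hbound : ∀ᶠ r in 𝓝[>] δ, μ t ≤ ENNReal.ofReal (r ^ d) := by
    filter_upwards [Ioo_mem_nhdsGT hδb] with r ⟨hδr, hrb⟩
    have hsub : t ⊆ closedBall x r := fun y hy =>
      (dist_le_diam_of_mem (isBounded_iff_ediam_ne_top.2 htop) hy hx).trans hδr.le
    exact (measure_mono hsub).trans
      (hball r ⟨ENNReal.toReal_nonneg.trans_lt hδr, hrb.le⟩)
  have hlim : Tendsto (fun r : ℝ => ENNReal.ofReal (r ^ d)) (𝓝[>] δ)
      (𝓝 (ENNReal.ofReal (δ ^ d))) :=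
    (ENNReal.continuous_ofReal.continuousAt.comp
      (Real.continuousAt_rpow_const _ _ (Or.inr hd))).tendsto.mono_left nhdsWithin_le_nhds
  calc μ t ≤ ENNReal.ofReal (δ ^ d) := ge_of_tendsto hlim hbound
    _ = ediam t ^ d := by
      rw [← ENNReal.ofReal_rpow_of_nonneg ENNReal.toReal_nonneg hd, ENNReal.ofReal_toReal htop]

/-- The mass distribution principle. -/
theorem measure_le_hausdorffMeasure_of_measure_closedBall_le {X : Type*} [MetricSpace X]
    [MeasurableSpace X] [BorelSpace X] (μ : Measure X) {d b : ℝ} (hd : 0 ≤ d) (hb : 0 < b)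
    {A : Set X}
    (hA : ∀ x ∈ A, ∀ r ∈ Ioc 0 b, μ (closedBall x r) ≤ ENNReal.ofReal (r ^ d)) :
    μ A ≤ μH[d] A := by
  -- `A` need not be measurable, so we restrict the outer measure rather than the measure.
  have hrestrict :
      OuterMeasure.restrict A μ.toOuterMeasure ≤ OuterMeasure.mkMetric (· ^ d) := by
    refine OuterMeasure.le_mkMetric _ _ (ENNReal.ofReal (b / 2)) (by simpa using hb)
      fun t ht => ?_
    rw [OuterMeasure.restrict_apply, Measure.coe_toOuterMeasure]
    rcases (t ∩ A).eq_empty_or_nonempty with hempty | ⟨x, hxt, hxA⟩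
    · simp [hempty]
    · have hdiam : ediam t < ENNReal.ofReal b :=
        ht.trans_lt ((ENNReal.ofReal_lt_ofReal_iff hb).2 (half_lt_self hb))
      exact (measure_mono inter_subset_left).trans
        (measure_le_ediam_rpow_of_measure_closedBall_le μ hd hxt hdiam (hA x hxA))
  simpa [OuterMeasure.restrict_apply, OuterMeasure.coe_mkMetric, Measure.hausdorffMeasure]
    using hrestrict A

lemma exists_pos_measure_setOf_forall_Ioc {X : Type*} [MeasurableSpace X] (μ : Measure X)
    {P : X → ℝ → Prop} (hP : ∀ᵐ x ∂μ, ∀ᶠ r in 𝓝[>] 0, P x r) {Z : Set X}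
    (hZ : μ Z ≠ 0) :
    ∃ b > 0, μ {x ∈ Z | ∀ r ∈ Ioc 0 b, P x r} ≠ 0 := by
  by_contra! hnull
  have hcover :
      Z ≤ᵐ[μ] ⋃ n : ℕ, {x ∈ Z | ∀ r ∈ Ioc 0 (1 / (n + 1 : ℝ)), P x r} := by
    filter_upwards [hP] with x hx hxZ
    obtain ⟨u, hu, hsub⟩ := mem_nhdsGT_iff_exists_Ioo_subset.1 hx
    obtain ⟨n, hn⟩ := exists_nat_one_div_lt (mem_Ioi.1 hu)
    exact mem_iUnion.2 ⟨n, hxZ, fun r hr => hsub ⟨hr.1, hr.2.trans_lt hn⟩⟩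
  exact hZ (measure_mono_null_ae hcover
    (measure_iUnion_null fun _ => hnull _ Nat.one_div_pos_of_nat))

theorem hausdorffMeasure_ne_zero_of_ae_eventually_measure_closedBall_le {X : Type*}
    [MetricSpace X] [MeasurableSpace X] [BorelSpace X] (μ : Measure X) {d : ℝ} (hd : 0 ≤ d)
    (h : ∀ᵐ x ∂μ, ∀ᶠ r in 𝓝[>] 0, μ (closedBall x r) ≤ ENNReal.ofReal (r ^ d))
    {Z : Set X} (hZ : μ Z ≠ 0) : μH[d] Z ≠ 0 := by
  obtain ⟨b, hb, hA⟩ := exists_pos_measure_setOf_forall_Ioc μ h hZ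
  refine fun hzero => hA (le_antisymm ?_ zero_le)
  calc μ {x ∈ Z | _} ≤ μH[d] {x ∈ Z | _} :=
        measure_le_hausdorffMeasure_of_measure_closedBall_le μ hd hb fun _ hx => hx.2
    _ ≤ μH[d] Z := measure_mono fun _ hx => hx.1
    _ = 0 := hzero

/-- If the lower pointwise dimension of a Borel probability measure is at least `d`
almost everywhere, then the Hausdorff dimension of the measure, i.e. the infimum of
`dimH Z` over sets `Z` of full measure, is at least `d`. -/
theorem dimH_measure_ge_of_liminf_ge {X : Type*} [MetricSpace X] [MeasurableSpace X]
    [BorelSpace X] (μ : Measure X) [IsProbabilityMeasure μ] (d : ℝ)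
    (h : ∀ᵐ x ∂μ,
      d ≤ Filter.liminf
        (fun r : ℝ => Real.log (μ (Metric.closedBall x r)).toReal / Real.log r)
        (nhdsWithin 0 (Set.Ioi 0))) :
    ∀ Z : Set X, μ Z = 1 → ENNReal.ofReal d ≤ dimH Z := by
  intro Z hZ
  refine ENNReal.le_of_forall_nnreal_lt fun s hs => le_dimH_of_hausdorffMeasure_ne_zero ?_
  have hsd : (s : ℝ) < d := ENNReal.coe_lt_ofReal.1 hs
  refine hausdorffMeasure_ne_zero_of_ae_eventually_measure_closedBall_le μ s.2 ?_
    (by simp [hZ])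
  filter_upwards [h] with x hx
  exact eventually_measure_closedBall_le_of_lt_liminf μ x (hsd.trans_le hx)
end

section
/- Let μ be a finite Borel measure on ℝ^n and A a measurable set with μ(A) > 0. Then for every δ > 0 there exist a measurable set Δ ⊆ A with μ(Δ) > μ(A) − δ and a number r₀ > 0 such that for all x ∈ Δ and all 0 < r < r₀, μ(B(x,r) ∩ A) ≥ (1/2) μ(B(x,r)). -/
/-!
By the Besicovitch density theorem, almost every point of `A` is a density point of `A`, so
it lies in the set of points at which `A` fills at least half of every closed ball of radius
`< 1 / (k + 1)`, for some `k`. These sets increase with `k`, and they are measurable because,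
by right-continuity of `r ↦ μ (closedBall x r)`, only rational radii matter. Continuity of `μ`
from below then yields a `k` for which the set has measure `> μ A - δ`.
-/

open Metric Filter Set Topology MeasureTheory ENNReal

section DensitySet

variable {α : Type*} [PseudoMetricSpace α] [MeasurableSpace α]

def uniformDensitySet (μ : Measure α) (A : Set α) (c : ℝ≥0∞) (r₀ : ℝ) : Set α :=
  {x | ∀ r ∈ Ioo 0 r₀, c * μ (closedBall x r) ≤ μ (closedBall x r ∩ A)}

theorem uniformDensitySet_anti (μ : Measure α) (A : Set α) (c : ℝ≥0∞) :
    Antitone (uniformDensitySet μ A c) :=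
  fun _ _ hr₀ _ hx r hr => hx r ⟨hr.1, hr.2.trans_le hr₀⟩

variable [OpensMeasurableSpace α]

theorem measurable_measure_closedBall [SecondCountableTopology α] (ν : Measure α) [SFinite ν]
    (r : ℝ) : Measurable fun x => ν (closedBall x r) := by
  have hs : MeasurableSet {p : α × α | dist p.2 p.1 ≤ r} :=
    (isClosed_le (continuous_snd.dist continuous_fst) continuous_const).measurableSet
  exact measurable_measure_prodMk_left hs

theorem tendsto_measure_closedBall_nhdsGT (ν : Measure α) [IsFiniteMeasure ν] (x : α) (r : ℝ) :
    Tendsto (fun s => ν (closedBall x s)) (𝓝[>] r) (𝓝 (ν (closedBall x r))) := by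
  have h := tendsto_measure_biInter_gt (μ := ν) (s := closedBall x) (a := r)
    (fun _ _ => measurableSet_closedBall.nullMeasurableSet)
    (fun _ _ _ hij => closedBall_subset_closedBall hij) ⟨r + 1, by linarith, measure_ne_top _ _⟩
  rwa [biInter_gt_closedBall] at h

/-- Holds by right-continuity of `r ↦ μ (closedBall x r ∩ A)`. -/
theorem mem_uniformDensitySet_iff_forall_rat (μ : Measure α) [IsFiniteMeasure μ] (A : Set α)
    (c : ℝ≥0∞) (r₀ : ℝ) (x : α) :
    x ∈ uniformDensitySet μ A c r₀ ↔
      ∀ q : ℚ, (q : ℝ) ∈ Ioo 0 r₀ → c * μ (closedBall x q) ≤ μ (closedBall x q ∩ A) := by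
  refine ⟨fun hx q hq => hx q hq, fun hx r hr => ?_⟩
  have hball : ∀ s, μ (closedBall x s ∩ A) = μ.restrict A (closedBall x s) := fun s =>
    (Measure.restrict_apply measurableSet_closedBall).symm
  have hnear : ∀ᶠ s in 𝓝[>] r, c * μ (closedBall x r) ≤ μ.restrict A (closedBall x s) := by
    filter_upwards [Ioo_mem_nhdsGT hr.2] with s hs
    obtain ⟨q, hrq, hqs⟩ := exists_rat_btwn hs.1
    calc c * μ (closedBall x r) ≤ c * μ (closedBall x q) := by gcongr
      _ ≤ μ (closedBall x q ∩ A) := hx q ⟨hr.1.trans hrq, hqs.trans hs.2⟩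
      _ ≤ μ.restrict A (closedBall x s) := by
          rw [hball]; exact measure_mono (closedBall_subset_closedBall hqs.le)
  rw [hball]
  exact ge_of_tendsto (tendsto_measure_closedBall_nhdsGT (μ.restrict A) x r) hnear

theorem measurableSet_uniformDensitySet [SecondCountableTopology α] (μ : Measure α)
    [IsFiniteMeasure μ] (A : Set α) (c : ℝ≥0∞) (r₀ : ℝ) :
    MeasurableSet (uniformDensitySet μ A c r₀) := by
  have hset : uniformDensitySet μ A c r₀ = ⋂ q : ℚ, ⋂ _ : (q : ℝ) ∈ Ioo 0 r₀,
      {x | c * μ (closedBall x q) ≤ μ.restrict A (closedBall x q)} := by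
    ext x
    simp only [mem_uniformDensitySet_iff_forall_rat, mem_iInter, mem_ofPred_eq,
      Measure.restrict_apply measurableSet_closedBall]
  rw [hset]
  exact .iInter fun q => .iInter fun _ => measurableSet_le
    ((measurable_measure_closedBall μ q).const_mul c) (measurable_measure_closedBall _ q)

end DensitySet

section Besicovitch

variable {β : Type*} [MetricSpace β] [MeasurableSpace β] [BorelSpace β]
  [SecondCountableTopology β] [HasBesicovitchCovering β]

theorem ae_exists_mem_uniformDensitySet (μ : Measure β) [IsLocallyFiniteMeasure μ] (A : Set β)
    {c : ℝ≥0∞} (hc : c < 1) :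
    ∀ᵐ x ∂μ.restrict A, ∃ k : ℕ, x ∈ uniformDensitySet μ A c (1 / (k + 1)) := by
  filter_upwards [Besicovitch.ae_tendsto_measure_inter_div μ A] with x hx
  obtain ⟨ε, hε, hsub⟩ :=
    mem_nhdsGT_iff_exists_Ioo_subset.mp (hx.eventually (eventually_gt_nhds hc))
  obtain ⟨k, hk⟩ := exists_nat_one_div_lt (mem_Ioi.mp hε)
  refine ⟨k, fun r hr => ?_⟩
  rw [inter_comm]
  exact ENNReal.mul_le_of_le_div (hsub ⟨hr.1, hr.2.trans hk⟩).out.le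

theorem measure_iUnion_inter_uniformDensitySet (μ : Measure β) [IsLocallyFiniteMeasure μ]
    (A : Set β) {c : ℝ≥0∞} (hc : c < 1) :
    μ (⋃ k : ℕ, A ∩ uniformDensitySet μ A c (1 / (k + 1))) = μ A := by
  refine le_antisymm (measure_mono (iUnion_subset fun _ => inter_subset_left))
    (measure_mono_ae ?_)
  filter_upwards [ae_imp_of_ae_restrict (ae_exists_mem_uniformDensitySet μ A hc)]
    with x hx hxA
  obtain ⟨k, hk⟩ := hx hxA
  exact mem_iUnion.mpr ⟨k, hxA, hk⟩

end Besicovitch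

/-- Uniform Borel density lemma: given a finite Borel measure `μ` on `ℝⁿ` and a
measurable set `A` of positive measure, for every `δ > 0` there are a measurable set
`Δ ⊆ A` with `μ(Δ) > μ(A) - δ` and `r₀ > 0` such that for all `x ∈ Δ` and
`0 < r < r₀` one has `μ(B(x,r) ∩ A) ≥ (1/2) μ(B(x,r))`. -/
theorem uniform_borel_density {n : ℕ} (μ : Measure (EuclideanSpace ℝ (Fin n)))
    [IsFiniteMeasure μ] (A : Set (EuclideanSpace ℝ (Fin n))) (hA : MeasurableSet A)
    (hpos : 0 < μ A) (δ : ℝ) (hδ : 0 < δ) :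
    ∃ Δ : Set (EuclideanSpace ℝ (Fin n)), MeasurableSet Δ ∧ Δ ⊆ A ∧
      μ A - ENNReal.ofReal δ < μ Δ ∧
      ∃ r₀ : ℝ, 0 < r₀ ∧ ∀ x ∈ Δ, ∀ r : ℝ, 0 < r → r < r₀ →
        (1 / 2 : ℝ≥0∞) * μ (Metric.closedBall x r) ≤ μ (Metric.closedBall x r ∩ A) := by
  set Δ : ℕ → Set (EuclideanSpace ℝ (Fin n)) :=
    fun k => A ∩ uniformDensitySet μ A (1 / 2) (1 / (k + 1))
  have hΔ : Monotone Δ := fun k l hkl =>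
    inter_subset_inter_right _ (uniformDensitySet_anti μ A _ (by gcongr))
  have hlt : μ A - ENNReal.ofReal δ < μ A :=
    ENNReal.sub_lt_self (measure_ne_top μ A) hpos.ne' (by simpa using hδ)
  have hA_eq : μ A = ⨆ k, μ (Δ k) := by
    rw [← hΔ.measure_iUnion, measure_iUnion_inter_uniformDensitySet μ A (by norm_num)]
  obtain ⟨k, hk⟩ := lt_iSup_iff.mp (hlt.trans_eq hA_eq)
  exact ⟨Δ k, hA.inter (measurableSet_uniformDensitySet μ A _ _), inter_subset_left, hk,
    1 / (k + 1), by positivity, fun x hx r hr hr' => hx.2 r ⟨hr, hr'⟩⟩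
end

section
/- Let μ be a Borel probability measure on a metric space X such that for μ-almost every x the pointwise dimension lim_{r→0} log μ(B(x,r))/log r exists and equals d. Then the lower box dimension of μ, defined as lim_{δ→0} inf{dim̲_B Z : μ(Z) ≥ 1 − δ}, is at most d, and the Hausdorff dimension of μ equals d. -/
/-!
If `μ (closedBall x ρ) ≥ ρ ^ s` for all points `x` of a set `A` and all small `ρ`, the balls of
radius `ρ / 3` around a maximal `ρ`-separated subset of `A` are disjoint, so that subset has at
most `μ univ * (3 / ρ) ^ s` points; hence both the lower box dimension and the Hausdorff dimension
of `A` are at most `s`. If instead `μ (closedBall x ρ) ≤ ρ ^ t` on a set `B` for all small `ρ`,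
then `μ` restricted to `B` is dominated by the `t`-dimensional Hausdorff measure (mass
distribution principle), so every set meeting `B` in positive measure has Hausdorff dimension at
least `t`. If the pointwise dimension is `d` almost everywhere, then for every `s > d` and `t < d`
almost every point lies in such sets at some scale `1 / (n + 1)`.
-/

open Metric Filter Set Topology MeasureTheory ENNReal

variable {X : Type*} [MetricSpace X]

/-- The smallest number of balls of radius `ε` needed to cover `Z` (`⊤` if no finite
cover exists). -/
noncomputable def coveringNumber (Z : Set X) (ε : ℝ) : ℕ∞ :=
  sInf {n : ℕ∞ | ∃ s : Finset X, (s.card : ℕ∞) = n ∧ Z ⊆ ⋃ x ∈ s, Metric.ball x ε}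

noncomputable def boxFun (Z : Set X) (ε : ℝ) : ℝ≥0∞ :=
  if coveringNumber Z ε = ⊤ then ⊤
  else ENNReal.ofReal (Real.log ((coveringNumber Z ε).toNat) / Real.log (1 / ε))

/-- Lower box dimension of a set. -/
noncomputable def lowerBoxDim (Z : Set X) : ℝ≥0∞ :=
  Filter.liminf (boxFun Z) (nhdsWithin 0 (Set.Ioi 0))

variable [MeasurableSpace X]

/-- Lower box dimension of a measure:
`lim_{δ→0} inf {lowerBoxDim Z : μ(Z) ≥ 1 - δ}`. -/
noncomputable def lowerBoxDimMeasure (μ : Measure X) : ℝ≥0∞ :=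
  ⨆ (δ : ℝ) (_ : 0 < δ),
    sInf {d : ℝ≥0∞ | ∃ Z : Set X, 1 - ENNReal.ofReal δ ≤ μ Z ∧ d = lowerBoxDim Z}

/-- Hausdorff dimension of a measure: `inf {dimH Z : μ(Z) = 1}`. -/
noncomputable def dimHMeasure (μ : Measure X) : ℝ≥0∞ :=
  ⨅ (Z : Set X) (_ : μ Z = 1), dimH Z

lemma ENNReal.le_ofReal_of_forall_lt {a : ℝ≥0∞} {d : ℝ} (h : ∀ s, d < s → a ≤ ENNReal.ofReal s) :
    a ≤ ENNReal.ofReal d :=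
  ge_of_tendsto (ENNReal.continuous_ofReal.continuousWithinAt (s := Ioi d) (x := d)).tendsto
    (eventually_nhdsWithin_of_forall h)

lemma le_ofReal_rpow_of_forall_Ioo {a : ℝ≥0∞} {D r t : ℝ} (hDr : D < r) (hD : D ≠ 0 ∨ 0 ≤ t)
    (h : ∀ ρ ∈ Ioo D r, a ≤ ENNReal.ofReal (ρ ^ t)) : a ≤ ENNReal.ofReal (D ^ t) :=
  ge_of_tendsto
    ((ENNReal.continuous_ofReal.tendsto _).comp
      ((Real.continuousAt_rpow_const D t hD).tendsto.mono_left nhdsWithin_le_nhds))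
    (eventually_of_mem (Ioo_mem_nhdsGT hDr) h)

lemma exists_nat_forall_Ioo_of_eventually {p : ℝ → Prop} (h : ∀ᶠ ρ in 𝓝[>] 0, p ρ) :
    ∃ n : ℕ, ∀ ρ ∈ Ioo (0 : ℝ) (1 / (n + 1)), p ρ := by
  obtain ⟨u, hu, hsub⟩ := mem_nhdsGT_iff_exists_Ioo_subset.1 h
  obtain ⟨n, hn⟩ := exists_nat_one_div_lt (mem_Ioi.1 hu)
  exact ⟨n, fun ρ hρ => hsub ⟨hρ.1, hρ.2.trans hn⟩⟩

lemma Real.rpow_lt_iff_log_div_log_lt {r y s : ℝ} (hr0 : 0 < r) (hr1 : r < 1) (hy : 0 < y) :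
    r ^ s < y ↔ Real.log y / Real.log r < s := by
  rw [div_lt_iff_of_neg (Real.log_neg hr0 hr1), ← Real.log_lt_log_iff (by positivity) hy,
    Real.log_rpow hr0]

section Covering

variable {Y : Type*} [MetricSpace Y]

lemma boxFun_le_of_subset_iUnion_ball {A : Set Y} {S : Finset Y} {r : ℝ} (hr0 : 0 < r)
    (hr1 : r < 1) (hcov : A ⊆ ⋃ x ∈ S, ball x r) :
    boxFun A r ≤ ENNReal.ofReal (Real.log S.card / Real.log (1 / r)) := by
  have hN : coveringNumber A r ≤ S.card := sInf_le ⟨S, rfl, hcov⟩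
  have hNtop : coveringNumber A r ≠ ⊤ := ne_top_of_le_ne_top (ENat.natCast_ne_top _) hN
  have hlog : Real.log (coveringNumber A r).toNat ≤ Real.log S.card := by
    have hle : (coveringNumber A r).toNat ≤ S.card := ENat.toNat_le_of_le_natCast hN
    rcases Nat.eq_zero_or_pos (coveringNumber A r).toNat with h0 | hpos
    · simp [h0, Real.log_natCast_nonneg]
    · exact Real.log_le_log (by positivity) (by exact_mod_cast hle)
  rw [boxFun, if_neg hNtop]
  exact ENNReal.ofReal_le_ofReal
    (div_le_div_of_nonneg_right hlog (Real.log_pos (one_lt_one_div hr0 hr1)).le)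

lemma exists_finset_cover_of_separated_card_le {A : Set Y} {r B : ℝ} (hr : 0 < r)
    (hB : ∀ S : Finset Y, ↑S ⊆ A → (S : Set Y).Pairwise (r ≤ dist · ·) → (S.card : ℝ) ≤ B) :
    ∃ S : Finset Y, A ⊆ ⋃ x ∈ S, ball x r ∧ (S.card : ℝ) ≤ B := by
  classical
  -- Otherwise every separated subset extends by an uncovered point, without bound on its size.
  by_contra! H
  suffices ∀ k : ℕ, ∃ S : Finset Y, ↑S ⊆ A ∧ (S : Set Y).Pairwise (r ≤ dist · ·) ∧ S.card = k by
    obtain ⟨S, hSA, hsep, hcard⟩ := this (⌊B⌋₊ + 1)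
    exact (Nat.lt_floor_add_one B).not_ge (by simpa [hcard] using hB S hSA hsep)
  intro k
  induction k with
  | zero => exact ⟨∅, by simp, by simp, rfl⟩
  | succ k ih =>
    obtain ⟨S, hSA, hsep, rfl⟩ := ih
    obtain ⟨z, hzA, hz⟩ := not_subset.1 fun hcov => (H S hcov).not_ge (hB S hSA hsep)
    simp only [mem_iUnion, mem_ball, not_exists, not_lt] at hz
    have hzS : z ∉ S := fun hzS => (hz z hzS).not_gt (by simpa using hr)
    refine ⟨insert z S, ?_, ?_, Finset.card_insert_of_notMem hzS⟩
    · rw [Finset.coe_insert]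
      exact insert_subset hzA hSA
    · rw [Finset.coe_insert]
      exact hsep.insert fun x hx _ => ⟨hz x hx, dist_comm z x ▸ hz x hx⟩

lemma lowerBoxDim_le_of_eventually_card_le {A : Set Y} {s C : ℝ}
    (h : ∀ᶠ r in 𝓝[>] 0, ∃ S : Finset Y, A ⊆ ⋃ x ∈ S, ball x r ∧ (S.card : ℝ) ≤ C / r ^ s) :
    lowerBoxDim A ≤ ENNReal.ofReal s := by
  refine ENNReal.le_ofReal_of_forall_lt fun s' hs' => ?_
  refine liminf_le_of_frequently_le' (Eventually.frequently ?_)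
  filter_upwards [h, Ioo_mem_nhdsGT one_pos,
    Real.tendsto_log_nhdsGT_zero.eventually_le_atBot (-Real.log C / (s' - s))]
    with r ⟨S, hcov, hcard⟩ ⟨hr0, hr1⟩ hlogr
  refine (boxFun_le_of_subset_iUnion_ball hr0 hr1 hcov).trans ?_
  rcases Nat.eq_zero_or_pos S.card with h0 | hpos
  · -- `Real.log 0 = 0`, so an empty cover gives `boxFun A r = 0`.
    simp [h0]
  have hrs : 0 < r ^ s := Real.rpow_pos_of_pos hr0 s
  have hC : 0 < C := by
    have : (0 : ℝ) < C / r ^ s := lt_of_lt_of_le (by exact_mod_cast hpos) hcard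
    exact (div_pos_iff_of_pos_right hrs).1 this
  have hL : Real.log (1 / r) = -Real.log r := by rw [one_div, Real.log_inv]
  have hlogr' : Real.log r * (s' - s) ≤ -Real.log C := (le_div_iff₀ (sub_pos.2 hs')).1 hlogr
  refine ENNReal.ofReal_le_ofReal ((div_le_iff₀ (Real.log_pos (one_lt_one_div hr0 hr1))).2 ?_)
  calc Real.log S.card ≤ Real.log (C / r ^ s) := Real.log_le_log (by positivity) hcard
    _ = Real.log C - s * Real.log r := by rw [Real.log_div hC.ne' hrs.ne', Real.log_rpow hr0]
    _ ≤ s' * Real.log (1 / r) := by rw [hL]; linarith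

lemma ediam_ball_le (x : Y) (r : ℝ) : ediam (ball x r) ≤ ENNReal.ofReal (2 * r) := by
  rw [← Metric.eball_ofReal, ENNReal.ofReal_mul zero_le_two, ENNReal.ofReal_ofNat]
  exact ediam_eball_le

lemma sum_ediam_ball_rpow_le (S : Finset Y) {r t : ℝ} (hr : 0 ≤ r) (ht : 0 ≤ t) :
    ∑ i : S, ediam (ball (i : Y) r) ^ t ≤ S.card * ENNReal.ofReal ((2 * r) ^ t) := by
  calc ∑ i : S, ediam (ball (i : Y) r) ^ t ≤ ∑ _i : S, ENNReal.ofReal (2 * r) ^ t :=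
        Finset.sum_le_sum fun i _ => ENNReal.rpow_le_rpow (ediam_ball_le _ _) ht
    _ = S.card * ENNReal.ofReal ((2 * r) ^ t) := by
        rw [ENNReal.ofReal_rpow_of_nonneg (by positivity) ht]
        simp

lemma dimH_le_of_eventually_card_le {A : Set Y} {s C : ℝ} (hs : 0 ≤ s)
    (h : ∀ᶠ r in 𝓝[>] 0, ∃ S : Finset Y, A ⊆ ⋃ x ∈ S, ball x r ∧ (S.card : ℝ) ≤ C / r ^ s) :
    dimH A ≤ ENNReal.ofReal s := by
  borelize Y
  refine ENNReal.le_ofReal_of_forall_lt fun t hst => ?_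
  have ht : 0 ≤ t := hs.trans hst.le
  suffices μH[t] A = 0 from dimH_le_of_hausdorffMeasure_ne_top (d := t.toNNReal)
    (by rw [Real.coe_toNNReal _ ht, this]; exact ENNReal.zero_ne_top)
  obtain ⟨S, hS⟩ := h.choice
  have hdiam : Tendsto (fun r : ℝ => ENNReal.ofReal (2 * r)) (𝓝[>] 0) (𝓝 0) := by
    exact ((ENNReal.continuous_ofReal.comp (continuous_const_mul 2)).tendsto' 0 0
      (by simp)).mono_left nhdsWithin_le_nhds
  have hbound : Tendsto (fun r : ℝ => ENNReal.ofReal (C * 2 ^ t * r ^ (t - s))) (𝓝[>] 0) (𝓝 0) := by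
    have hc : ContinuousAt (fun r : ℝ => C * 2 ^ t * r ^ (t - s)) 0 :=
      continuousAt_const.mul (Real.continuousAt_rpow_const 0 _ (Or.inr (sub_pos.2 hst).le))
    have := (ENNReal.continuous_ofReal.tendsto _).comp hc.tendsto
    rw [Real.zero_rpow (sub_pos.2 hst).ne', mul_zero, ENNReal.ofReal_zero] at this
    exact this.mono_left nhdsWithin_le_nhds
  refine le_antisymm ?_ zero_le
  calc μH[t] A ≤ liminf (fun r => ∑ i : S r, ediam (ball (i : Y) r) ^ t) (𝓝[>] 0) :=
        Measure.hausdorffMeasure_le_liminf_sum t A _ hdiam (fun r (i : S r) => ball (i : Y) r)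
          (Eventually.of_forall fun r i => ediam_ball_le _ _)
          (hS.mono fun r hr => hr.1.trans (iUnion₂_subset fun x hx =>
            subset_iUnion_of_subset ⟨x, hx⟩ subset_rfl))
    _ ≤ liminf (fun r : ℝ => ENNReal.ofReal (C * 2 ^ t * r ^ (t - s))) (𝓝[>] 0) := by
        refine liminf_le_liminf ?_
        filter_upwards [hS, self_mem_nhdsWithin] with r ⟨_, hcard⟩ hr
        have hr : 0 < r := hr
        refine (sum_ediam_ball_rpow_le _ hr.le ht).trans ?_
        have hCr : 0 ≤ C / r ^ s := (Nat.cast_nonneg _).trans hcard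
        calc ((S r).card : ℝ≥0∞) * ENNReal.ofReal ((2 * r) ^ t)
            ≤ ENNReal.ofReal (C / r ^ s) * ENNReal.ofReal ((2 * r) ^ t) := by
              gcongr
              rw [← ENNReal.ofReal_natCast]
              exact ENNReal.ofReal_le_ofReal hcard
          _ = ENNReal.ofReal (C * 2 ^ t * r ^ (t - s)) := by
              rw [← ENNReal.ofReal_mul hCr, Real.mul_rpow zero_le_two hr.le,
                Real.rpow_sub hr]
              ring_nf
    _ = 0 := hbound.liminf_eq

end Covering

lemma ae_mem_iUnion_of_eventually {α : Type*} [MeasurableSpace α] {μ : Measure α} {p : α → ℝ → Prop}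
    (h : ∀ᵐ x ∂μ, ∀ᶠ ρ in 𝓝[>] 0, p x ρ) :
    ∀ᵐ x ∂μ, x ∈ ⋃ n : ℕ, {x | ∀ ρ ∈ Ioo (0 : ℝ) (1 / (n + 1)), p x ρ} :=
  h.mono fun _ hx => mem_iUnion.2 (exists_nat_forall_Ioo_of_eventually hx)

lemma card_mul_le_measureReal_univ [OpensMeasurableSpace X] (μ : Measure X) [IsFiniteMeasure μ]
    {S : Finset X} {r c : ℝ} (hr : 0 < r) (hsep : (S : Set X).Pairwise (r ≤ dist · ·))
    (hc : ∀ x ∈ S, c ≤ μ.real (closedBall x (r / 3))) : S.card * c ≤ μ.real univ := by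
  have hdisj : (S : Set X).PairwiseDisjoint (fun x => closedBall x (r / 3)) :=
    fun x hx y hy hxy => closedBall_disjoint_closedBall (by linarith [hsep hx hy hxy])
  calc S.card * c = ∑ _x ∈ S, c := by simp
    _ ≤ ∑ x ∈ S, μ.real (closedBall x (r / 3)) := Finset.sum_le_sum hc
    _ = μ.real (⋃ x ∈ S, closedBall x (r / 3)) :=
        (measureReal_biUnion_finset hdisj fun _ _ => measurableSet_closedBall).symm
    _ ≤ μ.real univ := measureReal_mono (subset_univ _)

def massLowerBoundSet (μ : Measure X) (s r : ℝ) : Set X :=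
  {x | ∀ ρ ∈ Ioo 0 r, ENNReal.ofReal (ρ ^ s) ≤ μ (closedBall x ρ)}

def massUpperBoundSet (μ : Measure X) (t r : ℝ) : Set X :=
  {x | ∀ ρ ∈ Ioo 0 r, μ (closedBall x ρ) ≤ ENNReal.ofReal (ρ ^ t)}

lemma massLowerBoundSet_anti (μ : Measure X) (s : ℝ) : Antitone (massLowerBoundSet μ s) :=
  fun _ _ h _ hx ρ hρ => hx ρ ⟨hρ.1, hρ.2.trans_le h⟩

lemma eventually_cover_massLowerBoundSet [OpensMeasurableSpace X] (μ : Measure X)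
    [IsFiniteMeasure μ] (s : ℝ) {r₀ : ℝ} (hr₀ : 0 < r₀) :
    ∀ᶠ r in 𝓝[>] 0, ∃ S : Finset X, massLowerBoundSet μ s r₀ ⊆ ⋃ x ∈ S, ball x r ∧
      (S.card : ℝ) ≤ μ.real univ * 3 ^ s / r ^ s := by
  filter_upwards [Ioo_mem_nhdsGT hr₀] with r ⟨hr0, hr⟩
  have hmass : ∀ x ∈ massLowerBoundSet μ s r₀, (r / 3) ^ s ≤ μ.real (closedBall x (r / 3)) :=
    fun x hx => (ENNReal.ofReal_le_iff_le_toReal (measure_ne_top _ _)).1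
      (hx _ ⟨by positivity, by linarith⟩)
  refine exists_finset_cover_of_separated_card_le hr0 fun S hSA hsep => ?_
  have := card_mul_le_measureReal_univ μ hr0 hsep fun x hx => hmass x (hSA hx)
  rw [Real.div_rpow hr0.le (by norm_num)] at this
  rw [le_div_iff₀ (by positivity)]
  field_simp at this
  linarith

lemma isClosed_massUpperBoundSet (μ : Measure X) (t r : ℝ) :
    IsClosed (massUpperBoundSet μ t r) := by
  refine isClosed_of_closure_subset fun x hx ρ hρ =>
    le_ofReal_rpow_of_forall_Ioo hρ.2 (Or.inl hρ.1.ne') fun ρ' hρ' => ?_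
  obtain ⟨y, hy, hxy⟩ := Metric.mem_closure_iff.1 hx (ρ' - ρ) (sub_pos.2 hρ'.1)
  calc μ (closedBall x ρ) ≤ μ (closedBall y ρ') :=
        measure_mono (closedBall_subset_closedBall' (by linarith))
    _ ≤ _ := hy ρ' ⟨hρ.1.trans hρ'.1, hρ'.2⟩

lemma restrict_massUpperBoundSet_le_hausdorffMeasure [BorelSpace X] (μ : Measure X) {t r : ℝ}
    (ht : 0 ≤ t) (hr : 0 < r) : μ.restrict (massUpperBoundSet μ t r) ≤ μH[t] := by
  refine Measure.le_hausdorffMeasure t _ (ENNReal.ofReal (r / 2))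
    (ENNReal.ofReal_pos.2 (half_pos hr)) fun u hu => ?_
  rw [Measure.restrict_apply' (isClosed_massUpperBoundSet μ t r).measurableSet]
  rcases (u ∩ massUpperBoundSet μ t r).eq_empty_or_nonempty with he | ⟨x, hxu, hxB⟩
  · simp [he]
  have hfin : ediam u ≠ ⊤ := ne_top_of_le_ne_top ENNReal.ofReal_ne_top hu
  have hD : (ediam u).toReal < r := by
    have := ENNReal.toReal_mono ENNReal.ofReal_ne_top hu
    rw [ENNReal.toReal_ofReal (by positivity)] at this
    linarith
  rw [← ENNReal.ofReal_toReal hfin, ENNReal.ofReal_rpow_of_nonneg ENNReal.toReal_nonneg ht]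
  refine le_ofReal_rpow_of_forall_Ioo hD (Or.inr ht) fun ρ hρ => ?_
  calc μ (u ∩ _) ≤ μ (closedBall x ρ) := measure_mono (inter_subset_left.trans
        fun y hy => (dist_le_diam_of_mem' hfin hy hxu).trans hρ.1.le)
    _ ≤ _ := hxB ρ ⟨ENNReal.toReal_nonneg.trans_lt hρ.1, hρ.2⟩

lemma le_dimH_of_measure_inter_massUpperBoundSet_pos [BorelSpace X] {μ : Measure X} {Z : Set X}
    {t r : ℝ} (ht : 0 ≤ t) (hr : 0 < r) (hZ : 0 < μ (Z ∩ massUpperBoundSet μ t r)) :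
    ENNReal.ofReal t ≤ dimH Z := by
  have hle : μ (Z ∩ massUpperBoundSet μ t r) ≤ μH[t] Z := by
    rw [← Measure.restrict_apply' (isClosed_massUpperBoundSet μ t r).measurableSet]
    exact Measure.le_iff'.1 (restrict_massUpperBoundSet_le_hausdorffMeasure μ ht hr) Z
  refine le_dimH_of_hausdorffMeasure_ne_zero (d := t.toNNReal) ?_
  rw [Real.coe_toNNReal _ ht]
  exact (hZ.trans_le hle).ne'

lemma lowerBoxDimMeasure_le [OpensMeasurableSpace X] (μ : Measure X) [IsProbabilityMeasure μ]
    {d : ℝ} (h : ∀ s, d < s →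
      ∀ᵐ x ∂μ, ∀ᶠ ρ in 𝓝[>] 0, ENNReal.ofReal (ρ ^ s) ≤ μ (closedBall x ρ)) :
    lowerBoxDimMeasure μ ≤ ENNReal.ofReal d := by
  refine iSup₂_le fun δ hδ => ENNReal.le_ofReal_of_forall_lt fun s hs => ?_
  have hnull : μ (⋃ n : ℕ, massLowerBoundSet μ s (1 / (n + 1)))ᶜ = 0 :=
    ae_iff.1 (ae_mem_iUnion_of_eventually (h s hs))
  have hmono : Monotone fun n : ℕ => massLowerBoundSet μ s (1 / (n + 1)) :=
    (massLowerBoundSet_anti μ s).comp fun _ _ h => Nat.one_div_le_one_div h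
  have hlim := tendsto_measure_iUnion_atTop (μ := μ) hmono
  rw [measure_congr (ae_eq_univ.2 hnull), measure_univ] at hlim
  obtain ⟨n, hn⟩ := (hlim.eventually_const_lt
    (ENNReal.sub_lt_self one_ne_top one_ne_zero (ENNReal.ofReal_pos.2 hδ).ne')).exists
  exact sInf_le_of_le ⟨_, hn.le, rfl⟩ (lowerBoxDim_le_of_eventually_card_le
    (eventually_cover_massLowerBoundSet μ s Nat.one_div_pos_of_nat))

lemma dimHMeasure_le [OpensMeasurableSpace X] (μ : Measure X) [IsProbabilityMeasure μ]
    {d : ℝ} (hd : 0 ≤ d) (h : ∀ s, d < s →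
      ∀ᵐ x ∂μ, ∀ᶠ ρ in 𝓝[>] 0, ENNReal.ofReal (ρ ^ s) ≤ μ (closedBall x ρ)) :
    dimHMeasure μ ≤ ENNReal.ofReal d := by
  refine ENNReal.le_ofReal_of_forall_lt fun s hs => ?_
  have hnull : μ (⋃ n : ℕ, massLowerBoundSet μ s (1 / (n + 1)))ᶜ = 0 :=
    ae_iff.1 (ae_mem_iUnion_of_eventually (h s hs))
  refine iInf₂_le_of_le _ ((measure_congr (ae_eq_univ.2 hnull)).trans
    measure_univ) ((dimH_iUnion _).trans_le (iSup_le fun n => ?_))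
  exact dimH_le_of_eventually_card_le (hd.trans hs.le)
    (eventually_cover_massLowerBoundSet μ s Nat.one_div_pos_of_nat)

lemma le_dimHMeasure [BorelSpace X] (μ : Measure X) {d : ℝ} (h : ∀ t, t < d →
      ∀ᵐ x ∂μ, ∀ᶠ ρ in 𝓝[>] 0, μ (closedBall x ρ) ≤ ENNReal.ofReal (ρ ^ t)) :
    ENNReal.ofReal d ≤ dimHMeasure μ := by
  refine le_iInf₂ fun Z hZ => le_of_forall_lt fun c hc => ?_
  obtain ⟨t, ht0, hct, htd⟩ := ENNReal.lt_iff_exists_real_btwn.1 hc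
  have hnull : μ (⋃ n : ℕ, massUpperBoundSet μ t (1 / (n + 1)))ᶜ = 0 :=
    ae_iff.1 (ae_mem_iUnion_of_eventually (h t (ENNReal.ofReal_lt_ofReal_iff'.1 htd).1))
  obtain ⟨n, hn⟩ : ∃ n : ℕ, 0 < μ (Z ∩ massUpperBoundSet μ t (1 / (n + 1))) := by
    by_contra! H
    have : μ (Z ∩ ⋃ n : ℕ, massUpperBoundSet μ t (1 / (n + 1))) = 0 := by
      rw [inter_iUnion]
      exact measure_iUnion_null fun n => nonpos_iff_eq_zero.1 (H n)
    rw [measure_inter_conull hnull, hZ] at this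
    exact one_ne_zero this
  exact hct.trans_le (le_dimH_of_measure_inter_massUpperBoundSet_pos ht0 Nat.one_div_pos_of_nat hn)

lemma eventually_ofReal_rpow_le_measure_closedBall {μ : Measure X} [IsFiniteMeasure μ] {x : X}
    {d s : ℝ} (hx : Tendsto (fun r => Real.log (μ (closedBall x r)).toReal / Real.log r)
      (𝓝[>] 0) (𝓝 d)) (hpos : ∀ r, 0 < r → 0 < μ (closedBall x r)) (hs : d < s) :
    ∀ᶠ ρ in 𝓝[>] 0, ENNReal.ofReal (ρ ^ s) ≤ μ (closedBall x ρ) := by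
  filter_upwards [hx.eventually_lt_const hs, Ioo_mem_nhdsGT one_pos] with ρ hρ ⟨hρ0, hρ1⟩
  rw [ENNReal.ofReal_le_iff_le_toReal (measure_ne_top _ _)]
  exact ((Real.rpow_lt_iff_log_div_log_lt hρ0 hρ1
    (ENNReal.toReal_pos (hpos ρ hρ0).ne' (measure_ne_top _ _))).2 hρ).le

lemma eventually_measure_closedBall_le_ofReal_rpow {μ : Measure X} [IsFiniteMeasure μ] {x : X}
    {d t : ℝ} (hx : Tendsto (fun r => Real.log (μ (closedBall x r)).toReal / Real.log r)
      (𝓝[>] 0) (𝓝 d)) (ht : t < d) :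
    ∀ᶠ ρ in 𝓝[>] 0, μ (closedBall x ρ) ≤ ENNReal.ofReal (ρ ^ t) := by
  filter_upwards [hx.eventually_const_lt ht, Ioo_mem_nhdsGT one_pos] with ρ hρ ⟨hρ0, hρ1⟩
  rw [ENNReal.le_ofReal_iff_toReal_le (measure_ne_top _ _) (by positivity)]
  rcases ENNReal.toReal_nonneg.eq_or_lt with h0 | hpos
  · rw [← h0]
    positivity
  · exact le_of_not_gt fun hlt => ((Real.rpow_lt_iff_log_div_log_lt hρ0 hρ1 hpos).1 hlt).not_gt hρ

/-- Part of Young's criterion: if the pointwise dimension of `μ` exists and equals `d`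
almost everywhere, then the lower box dimension of `μ` is at most `d` and the
Hausdorff dimension of `μ` equals `d`. -/
theorem youngs_criterion_part [CompactSpace X] [BorelSpace X]
    (μ : Measure X) [IsProbabilityMeasure μ] (d : ℝ) (hd : 0 ≤ d)
    (h : ∀ᵐ x ∂μ, Filter.Tendsto
      (fun r : ℝ => Real.log (μ (Metric.closedBall x r)).toReal / Real.log r)
      (nhdsWithin 0 (Set.Ioi 0)) (nhds d)) :
    lowerBoxDimMeasure μ ≤ ENNReal.ofReal d ∧ dimHMeasure μ = ENNReal.ofReal d := by
  have hlower : ∀ s, d < s →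
      ∀ᵐ x ∂μ, ∀ᶠ ρ in 𝓝[>] 0, ENNReal.ofReal (ρ ^ s) ≤ μ (closedBall x ρ) := fun s hs => by
    filter_upwards [h, μ.support_mem_ae] with x hx hsupp
    exact eventually_ofReal_rpow_le_measure_closedBall hx
      (fun r hr => (μ.mem_support_iff_forall x).1 hsupp _ (closedBall_mem_nhds x hr)) hs
  have hupper : ∀ t, t < d →
      ∀ᵐ x ∂μ, ∀ᶠ ρ in 𝓝[>] 0, μ (closedBall x ρ) ≤ ENNReal.ofReal (ρ ^ t) := fun t ht =>
    h.mono fun x hx => eventually_measure_closedBall_le_ofReal_rpow hx ht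
  exact ⟨lowerBoxDimMeasure_le μ hlower,
    le_antisymm (dimHMeasure_le μ hd hlower) (le_dimHMeasure μ hupper)⟩
end
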